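/- arXiv:1506.08189 — 9 statements merged into one kernel-verified Lean document; each statement's English description precedes it below -/
import Mathlib

section
/- Let G_t be the edge-labeled complete graph on 2t vertices whose negative edges form a perfect matching M_t (t pairwise disjoint edges) and all other edges are positive. If a clustering (partition of the vertex set) of G_t has more than one cluster, then some vertex is incident to at least t−1 errors, where an error is a positive edge with endpoints in different clusters or a negative edge with endpoints in the same cluster. -/
lemma key_aux {V : Type*} [Fintype V] (t : ℕ) (hcard : Fintype.card V = 2 * t)
    (μ : V → V) (C : V → V → Prop) (hC : Equivalence C) (v : V)
    (hv : ({w : V | C v w}).ncard ≤ t) :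
    t - 1 ≤
      ({w : V | w ≠ v ∧ ((w ≠ μ v ∧ ¬ C v w) ∨ (w = μ v ∧ C v w))} : Set V).ncard := by
  have hsub : ({w : V | ¬ C v w} \ {μ v} : Set V) ⊆
      {w : V | w ≠ v ∧ ((w ≠ μ v ∧ ¬ C v w) ∨ (w = μ v ∧ C v w))} := by
    rintro w ⟨hw, hwm⟩
    simp only [Set.mem_singleton_iff] at hwm
    exact ⟨fun h => hw (h ▸ hC.refl v), Or.inl ⟨hwm, hw⟩⟩
  have hcompl : ({w : V | ¬ C v w} : Set V) = ({w : V | C v w} : Set V)ᶜ := rfl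
  have hadd : ({w : V | C v w} : Set V).ncard + ({w : V | C v w} : Set V)ᶜ.ncard
      = 2 * t := by
    rw [Set.ncard_add_ncard_compl, Nat.card_eq_fintype_card, hcard]
  have h1 : t ≤ ({w : V | ¬ C v w} : Set V).ncard := by
    rw [hcompl]; omega
  have h2 : ({w : V | ¬ C v w} : Set V).ncard ≤
      (({w : V | ¬ C v w} \ {μ v} : Set V)).ncard + 1 := by
    calc ({w : V | ¬ C v w} : Set V).ncard
        ≤ (({w : V | ¬ C v w} \ {μ v} : Set V) ∪ {μ v}).ncard :=
          Set.ncard_le_ncard (fun w hw => by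
            by_cases h : w = μ v
            · exact Or.inr h
            · exact Or.inl ⟨hw, h⟩) (Set.toFinite _)
      _ ≤ (({w : V | ¬ C v w} \ {μ v} : Set V)).ncard + ({μ v} : Set V).ncard :=
          Set.ncard_union_le _ _
      _ = _ := by rw [Set.ncard_singleton]
  have := Set.ncard_le_ncard hsub (Set.toFinite _)
  omega

/-- In `G_t` (complete graph on `2t` vertices whose negative edges form a
perfect matching, given by a fixed-point-free involution `μ`), any clustering with more
than one cluster has a vertex with at least `t − 1` incident errors. -/
theorem stmt_2 {V : Type*} [Fintype V] (t : ℕ) (hcard : Fintype.card V = 2 * t)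
    (μ : V → V) (hinv : ∀ v, μ (μ v) = v) (hnf : ∀ v, μ v ≠ v)
    (C : V → V → Prop) (hC : Equivalence C)
    (hmulti : ∃ u v : V, ¬ C u v) :
    ∃ v : V, t - 1 ≤
      ({w : V | w ≠ v ∧ ((w ≠ μ v ∧ ¬ C v w) ∨ (w = μ v ∧ C v w))} : Set V).ncard := by
  obtain ⟨u, v, huv⟩ := hmulti
  have hdisj : Disjoint ({w : V | C u w} : Set V) ({w : V | C v w} : Set V) := by
    rw [Set.disjoint_left]
    intro w hu hv
    exact huv (hC.trans hu (hC.symm hv))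
  have hsum : ({w : V | C u w} : Set V).ncard + ({w : V | C v w} : Set V).ncard ≤ 2 * t := by
    rw [← Set.ncard_union_eq hdisj (Set.toFinite _) (Set.toFinite _)]
    calc _ ≤ (Set.univ : Set V).ncard := Set.ncard_le_ncard (Set.subset_univ _) (Set.toFinite _)
      _ = 2 * t := by rw [Set.ncard_univ, Nat.card_eq_fintype_card, hcard]
  by_cases h : ({w : V | C u w} : Set V).ncard ≤ t
  · exact ⟨u, key_aux t hcard μ C hC u h⟩
  · exact ⟨v, key_aux t hcard μ C hC v (by omega)⟩
end

section
/- Let x be a fractional clustering, 0 < α < 1/2, u a pivot, T = {w ∈ S − {u} : x_{uw} ≤ α} with Σ_{w ∈ {u}∪T} x_{uw} ≤ (α/2)|{u} ∪ T| (Type 2 condition), and let z ∈ S − ({u} ∪ T), so x_{uz} > α. Let P = N⁺(z) ∩ ({u} ∪ T) and Q = N⁻(z) ∩ ({u} ∪ T), where N⁺ and N⁻ denote positive and negative neighborhoods. Then Σ_{w∈P} x_{wz} + Σ_{w∈Q} (1 − x_{wz}) ≥ min(1 − 2α, α/2) · |P|. -/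
/-- Type-2 pivot cross-edge bound. With `T = {w ∈ S − {u} : x u w ≤ α}`,
the Type-2 condition `∑_{w ∈ {u} ∪ T} x u w ≤ (α/2)|{u} ∪ T|`, a vertex
`z ∈ S − ({u} ∪ T)`, `P` the positive neighbors and `Q` the negative neighbors of `z`
inside `{u} ∪ T`, the total LP-cost of edges from `z` into the cluster is at least
`min(1 − 2α, α/2)·|P|`. -/
theorem stmt_7 {V : Type*} [Fintype V] [DecidableEq V] (x : V → V → ℝ)
    (hsymm : ∀ u v, x u v = x v u)
    (hself : ∀ u, x u u = 0)
    (hlb : ∀ u v, 0 ≤ x u v) (hub : ∀ u v, x u v ≤ 1)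
    (htri : ∀ v w z : V, v ≠ w → w ≠ z → v ≠ z → x v z ≤ x v w + x w z)
    (pos : V → V → Prop) [DecidableRel pos] (hpos : ∀ u v, pos u v ↔ pos v u)
    (α : ℝ) (hα0 : 0 < α) (hα : α < 1/2)
    (S : Finset V) (u : V) (hu : u ∈ S)
    (T : Finset V) (hT : T = S.filter (fun w => w ≠ u ∧ x u w ≤ α))
    (htype2 : ∑ w ∈ insert u T, x u w ≤ α / 2 * (insert u T).card)
    (z : V) (hzS : z ∈ S) (hz : z ∉ insert u T)
    (P Q : Finset V)
    (hP : P = (insert u T).filter (fun w => pos z w))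
    (hQ : Q = (insert u T).filter (fun w => ¬ pos z w)) :
    min (1 - 2 * α) (α / 2) * P.card ≤
      (∑ w ∈ P, x w z) + ∑ w ∈ Q, (1 - x w z) := by
  set C := insert u T with hC
  -- basic facts
  have hzu : z ≠ u := fun h => hz (h ▸ Finset.mem_insert_self u T)
  have hxuz : α < x u z := by
    by_contra h
    push_neg at h
    exact hz (Finset.mem_insert_of_mem (hT ▸ Finset.mem_filter.mpr ⟨hzS, hzu, h⟩))
  have hxuw : ∀ w ∈ C, x u w ≤ α := by
    intro w hw
    rcases Finset.mem_insert.mp hw with h | h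
    · rw [h, hself]; exact le_of_lt hα0
    · exact ((Finset.mem_filter.mp (hT ▸ h)).2).2
  have hwz : ∀ w ∈ C, w ≠ z := by
    intro w hw h
    exact hz (h ▸ hw)
  -- triangle-based pointwise bounds
  have hPz : ∀ w ∈ C, x u z - x u w ≤ x w z := by
    intro w hw
    by_cases h : w = u
    · subst h; rw [hself]; linarith
    · have := htri u w z (Ne.symm h) (hwz w hw) (Ne.symm hzu)
      linarith
  have hQz : ∀ w ∈ C, x w z ≤ x u w + x u z := by
    intro w hw
    by_cases h : w = u
    · subst h; rw [hself]; linarith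
    · have := htri w u z h (Ne.symm hzu) (hwz w hw)
      rw [hsymm w u] at this
      linarith
  have hPC : ∀ w ∈ P, w ∈ C := fun w hw => (Finset.mem_filter.mp (hP ▸ hw)).1
  have hQC : ∀ w ∈ Q, w ∈ C := fun w hw => (Finset.mem_filter.mp (hQ ▸ hw)).1
  have hcardP : (0:ℝ) ≤ (P.card : ℝ) := Nat.cast_nonneg _
  by_cases hbig : 1 - α ≤ x u z
  · -- use the 1 - 2α branch
    have h1 : ∀ w ∈ P, (1 : ℝ) - 2 * α ≤ x w z := by
      intro w hw
      have h2 := hPz w (hPC w hw)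
      have h3 := hxuw w (hPC w hw)
      linarith
    have h4 : ((1 : ℝ) - 2 * α) * P.card ≤ ∑ w ∈ P, x w z := by
      calc ((1:ℝ) - 2*α) * P.card = ∑ _w ∈ P, ((1:ℝ) - 2*α) := by
            rw [Finset.sum_const, nsmul_eq_mul, mul_comm]
        _ ≤ ∑ w ∈ P, x w z := Finset.sum_le_sum h1
    have h5 : (0:ℝ) ≤ ∑ w ∈ Q, (1 - x w z) :=
      Finset.sum_nonneg fun w _ => by linarith [hub w z]
    have h6 : min (1 - 2*α) (α/2) * (P.card : ℝ) ≤ (1 - 2*α) * P.card :=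
      mul_le_mul_of_nonneg_right (min_le_left _ _) hcardP
    linarith
  · -- use the α/2 branch
    push_neg at hbig
    have hsum : (∑ w ∈ P, x u w) + ∑ w ∈ Q, x u w = ∑ w ∈ C, x u w := by
      rw [hP, hQ]; exact Finset.sum_filter_add_sum_filter_not C _ _
    have hcard : P.card + Q.card = C.card := by
      rw [hP, hQ]; exact Finset.card_filter_add_card_filter_not _
    have h1 : (P.card : ℝ) * x u z - ∑ w ∈ P, x u w ≤ ∑ w ∈ P, x w z := by
      calc (P.card : ℝ) * x u z - ∑ w ∈ P, x u w
          = ∑ w ∈ P, (x u z - x u w) := by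
            rw [Finset.sum_sub_distrib, Finset.sum_const, nsmul_eq_mul]
        _ ≤ ∑ w ∈ P, x w z := Finset.sum_le_sum fun w hw => hPz w (hPC w hw)
    have h2 : (Q.card : ℝ) * (1 - x u z) - ∑ w ∈ Q, x u w ≤ ∑ w ∈ Q, (1 - x w z) := by
      calc (Q.card : ℝ) * (1 - x u z) - ∑ w ∈ Q, x u w
          = ∑ w ∈ Q, ((1 - x u z) - x u w) := by
            rw [Finset.sum_sub_distrib, Finset.sum_const, nsmul_eq_mul]
        _ ≤ ∑ w ∈ Q, (1 - x w z) :=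
            Finset.sum_le_sum fun w hw => by linarith [hQz w (hQC w hw)]
    have hcardR : (P.card : ℝ) + Q.card = C.card := by
      rw [← hcard]; push_cast; ring
    have hcardQ : (0:ℝ) ≤ (Q.card : ℝ) := Nat.cast_nonneg _
    have h6 : min (1 - 2*α) (α/2) * (P.card : ℝ) ≤ (α/2) * P.card :=
      mul_le_mul_of_nonneg_right (min_le_right _ _) hcardP
    -- combine: ∑_C x u w ≤ α/2 * |C| = α/2 * (|P| + |Q|)
    have htype2' : (∑ w ∈ P, x u w) + ∑ w ∈ Q, x u w ≤ α/2 * ((P.card:ℝ) + Q.card) := by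
      rw [hsum, hcardR]; exact htype2
    nlinarith [mul_le_mul_of_nonneg_left hbig.le hcardQ,
      mul_le_mul_of_nonneg_left hxuz.le hcardP]
end

section
/- For the labeled complete graph G_t on 2t vertices whose negative edges form a perfect matching (t ≥ 3), the unique optimal solution to the minimax-clustering LP relaxation—minimize M subject to triangle inequalities x_{uv} ≤ x_{uz} + x_{zv}, box constraints 0 ≤ x_e ≤ 1, and for each vertex v, Σ_{w ∈ N⁺(v)} x_{vw} + Σ_{w ∈ N⁻(v)} (1 − x_{vw}) ≤ M—is x_{uv} = 0 for all edges uv, with optimal value M = 1. -/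
/-- A feasible solution `(x, M)` of the minimax-clustering LP for `G_t`, the complete
graph whose negative edges form the perfect matching given by the fixed-point-free
involution `μ`: `x` is a fractional clustering (symmetric, zero on the diagonal,
values in `[0,1]`, triangle inequalities) and each vertex has fractional error weight
at most `M`. -/
def MatchingLPFeasible {V : Type*} [Fintype V] [DecidableEq V]
    (μ : V → V) (x : V → V → ℝ) (M : ℝ) : Prop :=
  (∀ u v, x u v = x v u) ∧ (∀ u, x u u = 0) ∧
  (∀ u v, 0 ≤ x u v) ∧ (∀ u v, x u v ≤ 1) ∧
  (∀ u v z : V, u ≠ v → v ≠ z → u ≠ z → x u v ≤ x u z + x z v) ∧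
  (∀ v : V,
    (∑ w ∈ Finset.univ.filter (fun w => w ≠ v ∧ w ≠ μ v), x v w) + (1 - x v (μ v)) ≤ M)

/-- For `t ≥ 3`, the unique optimal solution of the minimax LP for `G_t`
is `x ≡ 0`, with optimal value `M = 1`: the all-zero solution with `M = 1` is feasible,
every feasible solution has `M ≥ 1`, and every feasible solution with `M ≤ 1` has
`x u v = 0` for all edges `uv`. -/
theorem stmt_10 {V : Type*} [Fintype V] [DecidableEq V] (t : ℕ) (ht : 3 ≤ t)
    (hcard : Fintype.card V = 2 * t)
    (μ : V → V) (hinv : ∀ v, μ (μ v) = v) (hnf : ∀ v, μ v ≠ v) :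
    MatchingLPFeasible μ (fun _ _ => (0 : ℝ)) 1 ∧
    (∀ (x : V → V → ℝ) (M : ℝ), MatchingLPFeasible μ x M → 1 ≤ M) ∧
    (∀ (x : V → V → ℝ) (M : ℝ), MatchingLPFeasible μ x M → M ≤ 1 →
      ∀ u v : V, x u v = 0) := by
  have ht3 : (3 : ℝ) ≤ (t : ℝ) := by exact_mod_cast ht
  -- the key inequality
  have key : ∀ (x : V → V → ℝ) (M : ℝ), MatchingLPFeasible μ x M →
      ∀ v : V, 2 + (2 * (t : ℝ) - 4) * x v (μ v) ≤ 2 * M := by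
    intro x M hx v
    obtain ⟨hsym, hdiag, hnn, hle1, htri, herr⟩ := hx
    set u := μ v with hu
    have hμu : μ u = v := hinv v
    have hvu : v ≠ u := Ne.symm (hnf v)
    set F : Finset V := Finset.univ.filter (fun w => w ≠ v ∧ w ≠ u) with hF
    have hFcard : (F.card : ℝ) = 2 * (t : ℝ) - 2 := by
      have h1 : F = Finset.univ \ {v, u} := by
        ext w; simp [hF, not_or]
      have h2 : ({v, u} : Finset V).card = 2 := Finset.card_pair hvu
      have h3 : F.card = 2 * t - 2 := by
        rw [h1, Finset.card_sdiff_of_subset (by simp), h2, Finset.card_univ, hcard]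
      rw [h3]
      have : 2 ≤ 2 * t := by omega
      push_cast [Nat.cast_sub this]
      ring
    have hsum : (2 * (t : ℝ) - 2) * x v u ≤ (∑ w ∈ F, x v w) + (∑ w ∈ F, x u w) := by
      rw [← Finset.sum_add_distrib, ← hFcard]
      calc (F.card : ℝ) * x v u = ∑ _w ∈ F, x v u := by
            rw [Finset.sum_const, nsmul_eq_mul]
        _ ≤ ∑ w ∈ F, (x v w + x u w) := by
            apply Finset.sum_le_sum
            intro w hw
            simp only [hF, Finset.mem_filter] at hw
            have h := htri v u w hvu (Ne.symm hw.2.2) (Ne.symm hw.2.1)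
            rw [hsym w u] at h
            linarith [h]
    have h1 := herr v
    have h2 := herr u
    rw [hμu] at h2
    have hFu : Finset.univ.filter (fun w => w ≠ u ∧ w ≠ v) = F := by
      ext w; simp [hF, and_comm]
    rw [hFu] at h2
    rw [hsym u v] at h2
    -- h1 uses filter w ≠ v ∧ w ≠ μ v; with `set`, μ v is replaced by u
    linarith [h1, h2, hsum]
  refine ⟨?_, ?_, ?_⟩
  · refine ⟨fun _ _ => rfl, fun _ => rfl, fun _ _ => le_refl 0, fun _ _ => zero_le_one,
      fun _ _ _ _ _ _ => by norm_num, fun v => by simp⟩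
  · intro x M hx
    have hV : 0 < Fintype.card V := by omega
    obtain ⟨v⟩ := Fintype.card_pos_iff.mp hV
    have hk := key x M hx v
    have hnn := hx.2.2.1
    have h0 : 0 ≤ (2 * (t : ℝ) - 4) * x v (μ v) :=
      mul_nonneg (by linarith) (hnn v (μ v))
    linarith
  · intro x M hx hM u v
    obtain ⟨hsym, hdiag, hnn, hle1, htri, herr⟩ := hx
    have hfeas : MatchingLPFeasible μ x M := ⟨hsym, hdiag, hnn, hle1, htri, herr⟩
    have hzero : ∀ w, x w (μ w) = 0 := by
      intro w
      have hk := key x M hfeas w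
      have h2 : (2 : ℝ) * x w (μ w) ≤ (2 * (t : ℝ) - 4) * x w (μ w) :=
        mul_le_mul_of_nonneg_right (by linarith) (hnn w (μ w))
      have h3 := hnn w (μ w)
      linarith
    have hsumz : ∀ w : V, ∀ z ∈ Finset.univ.filter (fun z => z ≠ w ∧ z ≠ μ w),
        x w z = 0 := by
      intro w
      have herw := herr w
      rw [hzero w] at herw
      have hs0 : (∑ z ∈ Finset.univ.filter (fun z => z ≠ w ∧ z ≠ μ w), x w z) ≤ 0 := by
        linarith
      have hsn : (0 : ℝ) ≤ ∑ z ∈ Finset.univ.filter (fun z => z ≠ w ∧ z ≠ μ w), x w z :=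
        Finset.sum_nonneg (fun z _ => hnn w z)
      have heq := le_antisymm hs0 hsn
      exact (Finset.sum_eq_zero_iff_of_nonneg (fun z _ => hnn w z)).mp heq
    by_cases h1 : v = u
    · subst h1; exact hdiag v
    by_cases h2 : v = μ u
    · subst h2; exact hzero u
    · exact hsumz u v (by simp [h1, h2])
end

section
/- The dual solution for G_t defined by π_{u'} = π_{u''} = 1/2 for the endpoints of a fixed negative matching edge u'u'', π_v = 0 otherwise, σ_{u',u'',z} = 1/(2t−2) for all z ∉ {u', u''}, and all other σ variables zero, is feasible for the dual of the minimax LP and has objective value 1, provided t ≥ 2. -/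
/-- For `G_t` (negative edges the perfect matching given by the
fixed-point-free involution `μ`) with `t ≥ 2`, the dual solution
`π u' = π (μ u') = 1/2`, `π v = 0` otherwise, `σ u' (μ u') z = 1/(2t − 2)` for
`z ∉ {u', μ u'}`, all other `σ` zero, is feasible for the dual of the minimax LP
(nonnegativity, `∑ π ≤ 1`, the positive- and negative-edge constraints) and has
objective value `∑_v d⁻(v) π v = 1` (every vertex has negative degree 1). -/
theorem stmt_11 {V : Type*} [Fintype V] [DecidableEq V] (t : ℕ) (ht : 2 ≤ t)
    (hcard : Fintype.card V = 2 * t)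
    (μ : V → V) (hinv : ∀ v, μ (μ v) = v) (hnf : ∀ v, μ v ≠ v)
    (u' : V)
    (π : V → ℝ) (σ : V → V → V → ℝ)
    (hπ : ∀ v, π v = if v = u' ∨ v = μ u' then (1 : ℝ) / 2 else 0)
    (hσ : ∀ a b z, σ a b z =
      if a = u' ∧ b = μ u' ∧ z ≠ u' ∧ z ≠ μ u' then 1 / (2 * (t : ℝ) - 2) else 0) :
    (∀ v, 0 ≤ π v) ∧ (∀ a b z, 0 ≤ σ a b z) ∧ (∑ v, π v ≤ 1) ∧
    (∀ u v : V, u ≠ v → v ≠ μ u →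
      -π u - π v + (∑ z ∈ Finset.univ.filter (fun z => z ≠ u ∧ z ≠ v),
        (-σ u v z - σ v u z + σ z u v + σ z v u + σ u z v + σ v z u)) ≤ 0) ∧
    (∀ u : V,
      π u + π (μ u) + (∑ z ∈ Finset.univ.filter (fun z => z ≠ u ∧ z ≠ μ u),
        (-σ u (μ u) z - σ (μ u) u z + σ z u (μ u) + σ z (μ u) u
          + σ u z (μ u) + σ (μ u) z u)) ≤ 0) ∧
    (∑ v, (1 : ℝ) * π v = 1) := by
  set s : ℝ := 1 / (2 * (t : ℝ) - 2) with hs_def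
  have ht' : (2 : ℝ) ≤ (t : ℝ) := by exact_mod_cast ht
  have hden : (0 : ℝ) < 2 * (t : ℝ) - 2 := by linarith
  have hs0 : 0 ≤ s := by positivity
  have hshalf : s ≤ 1 / 2 := by
    rw [hs_def, div_le_div_iff₀ hden two_pos]; linarith
  have hwu : μ u' ≠ u' := hnf u'
  have hww : μ (μ u') = u' := hinv u'
  -- π as a sum of two indicator functions
  have hπ' : ∀ v, π v = (if v = u' then (1:ℝ)/2 else 0) + (if v = μ u' then (1:ℝ)/2 else 0) := by
    intro v
    rw [hπ v]
    by_cases h1 : v = u' <;> by_cases h2 : v = μ u' <;> simp_all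
  have hsumπ : ∑ v, π v = 1 := by
    rw [Finset.sum_congr rfl (fun v _ => hπ' v), Finset.sum_add_distrib,
      Finset.sum_ite_eq' Finset.univ u' (fun _ => (1:ℝ)/2),
      Finset.sum_ite_eq' Finset.univ (μ u') (fun _ => (1:ℝ)/2)]
    simp; norm_num
  -- cardinality of the filter set for the matching edge
  have hfcard : ∀ (a b : V), a ≠ b →
      (Finset.univ.filter (fun z => z ≠ a ∧ z ≠ b)).card = 2 * t - 2 := by
    intro a b hab
    have : Finset.univ.filter (fun z => z ≠ a ∧ z ≠ b) = Finset.univ \ {a, b} := by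
      ext z; simp [not_or]
    rw [this, Finset.card_sdiff_of_subset (Finset.subset_univ _), Finset.card_univ, hcard]
    rw [Finset.card_insert_of_notMem (by simp [hab]), Finset.card_singleton]
  have hcast : ((2 * t - 2 : ℕ) : ℝ) = 2 * (t : ℝ) - 2 := by
    have h2 : 2 ≤ 2 * t := by omega
    push_cast [Nat.cast_sub h2]; ring
  have hstot : ((2 * t - 2 : ℕ) : ℝ) * s = 1 := by
    rw [hcast, hs_def]; field_simp
    exact div_self (ne_of_gt (by linarith))
  refine ⟨?_, ?_, ?_, ?_, ?_, ?_⟩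
  · intro v; rw [hπ v]; split <;> norm_num
  · intro a b z; rw [hσ a b z]; split
    · exact hs0
    · exact le_refl 0
  · exact le_of_eq hsumπ
  · -- positive edge constraints
    intro u v huv hvμ
    by_cases hu1 : u = u'
    · -- u = u' : after subst, u' is replaced by u
      subst hu1
      have hv1 : v ≠ u := fun h => huv h.symm
      have hv2 : v ≠ μ u := hvμ
      have hsum : ∑ z ∈ Finset.univ.filter (fun z => z ≠ u ∧ z ≠ v),
          (-σ u v z - σ v u z + σ z u v + σ z v u + σ u z v + σ v z u)
          = ∑ z ∈ Finset.univ.filter (fun z => z ≠ u ∧ z ≠ v),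
            (if z = μ u then s else 0) := by
        refine Finset.sum_congr rfl fun z hz => ?_
        simp only [Finset.mem_filter, Finset.mem_univ, true_and] at hz
        simp [hσ, hz.1, hz.2, hv1, hv2, hwu, Ne.symm hv1, Ne.symm hv2]
      rw [hsum, Finset.sum_ite_eq' _ (μ u) (fun _ => s)]
      have hmem : μ u ∈ Finset.univ.filter (fun z => z ≠ u ∧ z ≠ v) := by
        simp [hwu, Ne.symm hv2]
      rw [if_pos hmem, hπ u, hπ v, if_pos (Or.inl rfl), if_neg (by tauto)]
      linarith
    · by_cases hu2 : u = μ u'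
      · -- u = μ u' : after subst, u is replaced by μ u'
        subst hu2
        have hv1 : v ≠ μ u' := fun h => huv h.symm
        have hv2 : v ≠ u' := by rwa [hww] at hvμ
        have hsum : ∑ z ∈ Finset.univ.filter (fun z => z ≠ μ u' ∧ z ≠ v),
            (-σ (μ u') v z - σ v (μ u') z + σ z (μ u') v + σ z v (μ u') + σ (μ u') z v + σ v z (μ u'))
            = ∑ z ∈ Finset.univ.filter (fun z => z ≠ μ u' ∧ z ≠ v),
              (if z = u' then s else 0) := by
          refine Finset.sum_congr rfl fun z hz => ?_
          simp only [Finset.mem_filter, Finset.mem_univ, true_and] at hz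
          simp [hσ, hz.1, hz.2, hv1, hv2, hwu, Ne.symm hv1, Ne.symm hv2]
        rw [hsum, Finset.sum_ite_eq' _ u' (fun _ => s)]
        have hmem : u' ∈ Finset.univ.filter (fun z => z ≠ μ u' ∧ z ≠ v) := by
          simp [Ne.symm hwu, Ne.symm hv2]
        rw [if_pos hmem, hπ (μ u'), hπ v, if_pos (Or.inr rfl), if_neg (by tauto)]
        linarith
      · by_cases hv1 : v = u'
        · -- v = u', u ∉ {u', μ u'} : after subst, u' is replaced by v
          subst hv1
          have hnu : μ v ≠ u := fun h => hu2 h.symm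
          have hsum : ∑ z ∈ Finset.univ.filter (fun z => z ≠ u ∧ z ≠ v),
              (-σ u v z - σ v u z + σ z u v + σ z v u + σ u z v + σ v z u)
              = ∑ z ∈ Finset.univ.filter (fun z => z ≠ u ∧ z ≠ v),
                (if z = μ v then s else 0) := by
            refine Finset.sum_congr rfl fun z hz => ?_
            simp only [Finset.mem_filter, Finset.mem_univ, true_and] at hz
            simp [hσ, hz.1, hz.2, hu1, hu2, hwu, Ne.symm hwu, huv]
          rw [hsum, Finset.sum_ite_eq' _ (μ v) (fun _ => s)]
          have hmem : μ v ∈ Finset.univ.filter (fun z => z ≠ u ∧ z ≠ v) := by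
            simp [hwu, hnu]
          rw [if_pos hmem, hπ u, hπ v, if_pos (Or.inl rfl), if_neg (by tauto)]
          linarith
        · by_cases hv2 : v = μ u'
          · -- v = μ u', u ∉ {u', μ u'} : after subst, v is replaced by μ u'
            subst hv2
            have hnu : u' ≠ u := fun h => hu1 h.symm
            have hsum : ∑ z ∈ Finset.univ.filter (fun z => z ≠ u ∧ z ≠ μ u'),
                (-σ u (μ u') z - σ (μ u') u z + σ z u (μ u') + σ z (μ u') u
                  + σ u z (μ u') + σ (μ u') z u)
                = ∑ z ∈ Finset.univ.filter (fun z => z ≠ u ∧ z ≠ μ u'),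
                  (if z = u' then s else 0) := by
              refine Finset.sum_congr rfl fun z hz => ?_
              simp only [Finset.mem_filter, Finset.mem_univ, true_and] at hz
              simp [hσ, hz.1, hz.2, hu1, hu2, hwu, Ne.symm hwu, huv]
            rw [hsum, Finset.sum_ite_eq' _ u' (fun _ => s)]
            have hmem : u' ∈ Finset.univ.filter (fun z => z ≠ u ∧ z ≠ μ u') := by
              simp [Ne.symm hwu, hnu]
            rw [if_pos hmem, hπ u, hπ (μ u'), if_pos (Or.inr rfl), if_neg (by tauto)]
            linarith
          · -- generic case: all σ terms vanish
            have hsum : ∑ z ∈ Finset.univ.filter (fun z => z ≠ u ∧ z ≠ v),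
                (-σ u v z - σ v u z + σ z u v + σ z v u + σ u z v + σ v z u)
                = 0 := by
              refine Finset.sum_eq_zero fun z hz => ?_
              simp [hσ, hu1, hu2, hv1, hv2]
            rw [hsum, hπ u, hπ v, if_neg (by tauto), if_neg (by tauto)]
            norm_num
  · -- negative edge constraints
    intro u
    by_cases hu1 : u = u'
    · -- after subst, u' is replaced by u
      subst hu1
      have hsum : ∑ z ∈ Finset.univ.filter (fun z => z ≠ u ∧ z ≠ μ u),
          (-σ u (μ u) z - σ (μ u) u z + σ z u (μ u) + σ z (μ u) u
            + σ u z (μ u) + σ (μ u) z u) = -1 := by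
        have heq : ∀ z ∈ Finset.univ.filter (fun z => z ≠ u ∧ z ≠ μ u),
            (-σ u (μ u) z - σ (μ u) u z + σ z u (μ u) + σ z (μ u) u
              + σ u z (μ u) + σ (μ u) z u) = -s := by
          intro z hz
          simp only [Finset.mem_filter, Finset.mem_univ, true_and] at hz
          simp [hσ, hz.1, hz.2, hwu, Ne.symm hwu]
        rw [Finset.sum_congr rfl heq, Finset.sum_const, hfcard u (μ u) (Ne.symm hwu),
          nsmul_eq_mul, mul_neg, hstot]
      rw [hsum, hπ u, hπ (μ u), if_pos (Or.inl rfl), if_pos (Or.inr rfl)]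
      norm_num
    · by_cases hu2 : u = μ u'
      · -- after subst, u is replaced by μ u'
        subst hu2
        have hsum : ∑ z ∈ Finset.univ.filter (fun z => z ≠ μ u' ∧ z ≠ μ (μ u')),
            (-σ (μ u') (μ (μ u')) z - σ (μ (μ u')) (μ u') z + σ z (μ u') (μ (μ u'))
              + σ z (μ (μ u')) (μ u') + σ (μ u') z (μ (μ u')) + σ (μ (μ u')) z (μ u')) = -1 := by
          have heq : ∀ z ∈ Finset.univ.filter (fun z => z ≠ μ u' ∧ z ≠ μ (μ u')),
              (-σ (μ u') (μ (μ u')) z - σ (μ (μ u')) (μ u') z + σ z (μ u') (μ (μ u'))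
                + σ z (μ (μ u')) (μ u') + σ (μ u') z (μ (μ u')) + σ (μ (μ u')) z (μ u')) = -s := by
            intro z hz
            simp only [Finset.mem_filter, Finset.mem_univ, true_and, hww] at hz ⊢
            simp [hσ, hz.1, hz.2, hwu, Ne.symm hwu]
          rw [Finset.sum_congr rfl heq, Finset.sum_const]
          have hc : (Finset.univ.filter (fun z => z ≠ μ u' ∧ z ≠ μ (μ u'))).card = 2 * t - 2 := by
            simp only [hww]
            exact hfcard (μ u') u' hwu
          rw [hc, nsmul_eq_mul, mul_neg, hstot]
        rw [hsum, hπ (μ u'), hπ (μ (μ u')), if_pos (Or.inr rfl), if_pos (Or.inl hww)]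
        norm_num
      · have hu3 : μ u ≠ u' := fun h => hu2 (by rw [← h, hinv])
        have hu4 : μ u ≠ μ u' := fun h => hu1 (by
          have := congrArg μ h; rwa [hinv, hinv] at this)
        have hsum : ∑ z ∈ Finset.univ.filter (fun z => z ≠ u ∧ z ≠ μ u),
            (-σ u (μ u) z - σ (μ u) u z + σ z u (μ u) + σ z (μ u) u
              + σ u z (μ u) + σ (μ u) z u) = 0 := by
          refine Finset.sum_eq_zero fun z hz => ?_
          simp [hσ, hu1, hu2, hu3, hu4]
        rw [hsum, hπ u, hπ (μ u), if_neg (by tauto), if_neg (by tauto)]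
        norm_num
  · simp only [one_mul]; exact hsumπ
end

section
/- For the graph G_n (star of positive edges centered at u*, all other edges negative), in any integer clustering that clusters u* with t other vertices and the remaining n − t vertices as singletons, the minimum over all vertices of the number of correct incident edges equals min(t, n − t + 1, n − 1); hence the optimal minimax-MaxAgree value over such clusterings is ⌊(n+1)/2⌋, achieved at t = ⌊(n+1)/2⌋ (for n ≥ 2). -/
/-- For the star graph `G_n` on `n + 1` vertices (all edges incident to
`ustar` positive, all others negative) and the clustering that puts `ustar` with a set
`T` of `t` other vertices and all remaining vertices as singletons, the minimum over
all vertices of the number of correct incident edges equals `min(t, n − t + 1, n − 1)`;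
hence the optimal minimax-MaxAgree value over such clusterings is `⌊(n+1)/2⌋`, achieved
at `t = ⌊(n+1)/2⌋` (for `n ≥ 2`). An edge is correct if it is a positive edge inside a
cluster or a negative edge between clusters. -/
theorem stmt_13 {V : Type*} [Fintype V] [DecidableEq V] (n : ℕ) (hn : 2 ≤ n)
    (hcard : Fintype.card V = n + 1) (ustar : V)
    (t : ℕ) (T : Finset V) (hTu : ustar ∉ T) (hTcard : T.card = t)
    (C : V → V → Prop)
    (hC : ∀ u v, C u v ↔ (u = v ∨ (u ∈ insert ustar T ∧ v ∈ insert ustar T))) :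
    sInf (Set.range (fun v : V =>
        ({w : V | w ≠ v ∧ (((v = ustar ∨ w = ustar) ∧ C v w) ∨
            (¬(v = ustar ∨ w = ustar) ∧ ¬ C v w))} : Set V).ncard))
      = min t (min (n - t + 1) (n - 1)) ∧
    (∀ s : ℕ, s ≤ n → min s (min (n - s + 1) (n - 1)) ≤ (n + 1) / 2) ∧
    min ((n + 1) / 2) (min (n - (n + 1) / 2 + 1) (n - 1)) = (n + 1) / 2 := by
  have htn : t ≤ n := by
    have hsub : T ⊆ Finset.univ.erase ustar := fun x hx =>
      Finset.mem_erase.2 ⟨fun h => hTu (h ▸ hx), Finset.mem_univ x⟩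
    have := Finset.card_le_card hsub
    rw [hTcard, Finset.card_erase_of_mem (Finset.mem_univ _), Finset.card_univ, hcard] at this
    simpa using this
  set f : V → ℕ := fun v : V =>
        ({w : V | w ≠ v ∧ (((v = ustar ∨ w = ustar) ∧ C v w) ∨
            (¬(v = ustar ∨ w = ustar) ∧ ¬ C v w))} : Set V).ncard with hf
  have h_ustar : f ustar = t := by
    have hset : ({w : V | w ≠ ustar ∧ (((ustar = ustar ∨ w = ustar) ∧ C ustar w) ∨
            (¬(ustar = ustar ∨ w = ustar) ∧ ¬ C ustar w))} : Set V) = ↑T := by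
      ext w
      simp only [Set.mem_setOf_eq, hC, Finset.mem_insert, Finset.mem_coe]
      have e : ustar = w ↔ w = ustar := eq_comm
      have h2 : w = ustar → w ∉ T := fun h => h ▸ hTu
      tauto
    show ({w : V | w ≠ ustar ∧ (((ustar = ustar ∨ w = ustar) ∧ C ustar w) ∨
            (¬(ustar = ustar ∨ w = ustar) ∧ ¬ C ustar w))} : Set V).ncard = t
    rw [hset, Set.ncard_coe_finset, hTcard]
  have h_T : ∀ v ∈ T, f v = n - t + 1 := by
    intro v hv
    have hvne : v ≠ ustar := fun h => hTu (h ▸ hv)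
    have hset : ({w : V | w ≠ v ∧ (((v = ustar ∨ w = ustar) ∧ C v w) ∨
            (¬(v = ustar ∨ w = ustar) ∧ ¬ C v w))} : Set V)
        = ↑(insert ustar (Finset.univ \ insert ustar T)) := by
      ext w
      simp only [Set.mem_setOf_eq, hC, Finset.mem_coe, Finset.mem_insert,
        Finset.mem_sdiff, Finset.mem_univ, true_and]
      have e : v = w ↔ w = v := eq_comm
      have h2 : w = ustar → w ∉ T := fun h => h ▸ hTu
      have h3 : w = v → w ∈ T := fun h => h ▸ hv
      tauto
    show ({w : V | w ≠ v ∧ (((v = ustar ∨ w = ustar) ∧ C v w) ∨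
            (¬(v = ustar ∨ w = ustar) ∧ ¬ C v w))} : Set V).ncard = n - t + 1
    rw [hset, Set.ncard_coe_finset, Finset.card_insert_of_notMem (by
      simp), Finset.card_sdiff_of_subset (Finset.subset_univ _),
      Finset.card_univ, hcard, Finset.card_insert_of_notMem hTu, hTcard]
    omega
  have h_out : ∀ v, v ≠ ustar → v ∉ T → f v = n - 1 := by
    intro v hvne hvT
    have hset : ({w : V | w ≠ v ∧ (((v = ustar ∨ w = ustar) ∧ C v w) ∨
            (¬(v = ustar ∨ w = ustar) ∧ ¬ C v w))} : Set V)
        = ↑(Finset.univ \ {v, ustar}) := by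
      ext w
      simp only [Set.mem_setOf_eq, hC, Finset.mem_coe, Finset.mem_sdiff, Finset.mem_univ,
        true_and, Finset.mem_insert, Finset.mem_singleton]
      have e : v = w ↔ w = v := eq_comm
      tauto
    show ({w : V | w ≠ v ∧ (((v = ustar ∨ w = ustar) ∧ C v w) ∨
            (¬(v = ustar ∨ w = ustar) ∧ ¬ C v w))} : Set V).ncard = n - 1
    rw [hset, Set.ncard_coe_finset, Finset.card_sdiff_of_subset (Finset.subset_univ _),
      Finset.card_univ, hcard]
    rw [Finset.card_insert_of_notMem (by simpa using hvne), Finset.card_singleton]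
    omega
  refine ⟨?_, fun s hs => by omega, by omega⟩
  set M := min t (min (n - t + 1) (n - 1)) with hM
  have hlb : ∀ x ∈ Set.range f, M ≤ x := by
    rintro x ⟨v, rfl⟩
    by_cases hvu : v = ustar
    · subst hvu; rw [h_ustar]; omega
    by_cases hvT : v ∈ T
    · rw [h_T v hvT]; omega
    · rw [h_out v hvu hvT]; omega
  have hmem : M ∈ Set.range f := by
    by_cases hMt : M = t
    · exact ⟨ustar, by rw [h_ustar, hMt]⟩
    · have hMlt : M < t := lt_of_le_of_ne (min_le_left _ _) hMt
      have ht1 : 1 ≤ t := by omega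
      have hM2 : M = n - t + 1 := by omega
      obtain ⟨v, hv⟩ := Finset.card_pos.1 (by rw [hTcard]; omega : 0 < T.card)
      exact ⟨v, by rw [h_T v hv, hM2]⟩
  exact le_antisymm (Nat.sInf_le hmem) (le_csInf ⟨M, hmem⟩ hlb)
end

section
/- In the NP-hardness reduction graph H built from a 4-regular graph G on n ≥ 7 vertices (with cliques C_{uvw} of size 7 for each 3-subset of V(G)), if a clustering is t-perfect (each original vertex u has at most 7(C(n−1,2) − 1) + 2 incident errors and each clique vertex at most 3), then every cluster contains vertices from at most one clique C_{uvw} of H − G'. -/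
/-- Vertices of the reduction graph `H`: the original vertices of `G'` together with,
for each 3-element subset `s` of vertices, a 7-vertex clique `C_s`. -/
abbrev HVert (V : Type*) := V ⊕ ({s : Finset V // s.card = 3} × Fin 7)

/-- The positive edges of `H`: inside `G'` they are the edges of `G`; each clique is
internally positive and joined positively to the three vertices of its defining
3-set; all other edges are negative. -/
def HPos {V : Type*} (G : V → V → Prop) : HVert V → HVert V → Prop
  | Sum.inl u, Sum.inl v => G u v
  | Sum.inl u, Sum.inr p => u ∈ p.1.1
  | Sum.inr p, Sum.inl u => u ∈ p.1.1
  | Sum.inr p, Sum.inr q => p.1 = q.1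

/-- The number of errors at vertex `v` under the clustering (equivalence relation) `C`:
positive edges leaving the cluster of `v` plus negative edges inside it. -/
noncomputable def errAt {W : Type*} (pos : W → W → Prop) (C : W → W → Prop) (v : W) : ℕ :=
  ({w : W | w ≠ v ∧ ((pos v w ∧ ¬ C v w) ∨ (¬ pos v w ∧ C v w))}).ncard

/-- A clustering of `H` is `t`-perfect if every original vertex has at most
`7(C(n−1,2) − 1) + 2` incident errors and every clique vertex at most `3`. -/
def TPerfect {V : Type*} [Fintype V] (G : V → V → Prop)
    (C : HVert V → HVert V → Prop) : Prop :=
  (∀ u : V, errAt (HPos G) C (Sum.inl u) ≤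
      7 * (Nat.choose (Fintype.card V - 1) 2 - 1) + 2) ∧
  (∀ p : {s : Finset V // s.card = 3} × Fin 7, errAt (HPos G) C (Sum.inr p) ≤ 3)

/-- Lower bound on errors at a clique vertex when two distinct cliques meet a cluster. -/
lemma err_ge {V : Type*} [Fintype V] [DecidableEq V] (G : V → V → Prop)
    (C : HVert V → HVert V → Prop) (hC : Equivalence C)
    (s s' : {s : Finset V // s.card = 3}) (i j : Fin 7)
    (hne : s ≠ s') (hij : C (Sum.inr (s, i)) (Sum.inr (s', j))) :
    ({k : Fin 7 | ¬ C (Sum.inr (s, i)) (Sum.inr (s, k))}).ncard +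
    ({k : Fin 7 | ¬ C (Sum.inr (s', j)) (Sum.inr (s', k))}ᶜ).ncard ≤
      errAt (HPos G) C (Sum.inr (s, i)) := by
  classical
  set v : HVert V := Sum.inr (s, i) with hv
  set A : Set (Fin 7) := {k | ¬ C (Sum.inr (s, i)) (Sum.inr (s, k))} with hA
  set B : Set (Fin 7) := {k | ¬ C (Sum.inr (s', j)) (Sum.inr (s', k))}ᶜ with hB
  set f : Fin 7 → HVert V := fun k => Sum.inr (s, k) with hf
  set g : Fin 7 → HVert V := fun k => Sum.inr (s', k) with hg
  have hfinj : Function.Injective f := by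
    intro a b h
    simpa [hf, Prod.ext_iff] using h
  have hginj : Function.Injective g := by
    intro a b h
    simpa [hg, Prod.ext_iff] using h
  have hsub : f '' A ∪ g '' B ⊆
      {w : HVert V | w ≠ v ∧ ((HPos G v w ∧ ¬ C v w) ∨ (¬ HPos G v w ∧ C v w))} := by
    rintro x (⟨k, hk, rfl⟩ | ⟨k, hk, rfl⟩)
    · refine ⟨?_, Or.inl ⟨?_, hk⟩⟩
      · intro h
        have hk' : k = i := by simpa [hf, hv, Prod.ext_iff] using h
        exact hk (hk' ▸ hC.refl (Sum.inr (s, i)))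
      · show HPos G (Sum.inr (s, i)) (Sum.inr (s, k))
        simp [HPos]
    · have hkC : C (Sum.inr (s', j)) (Sum.inr (s', k)) := by
        simpa [hB] using hk
      refine ⟨?_, Or.inr ⟨?_, hC.trans hij hkC⟩⟩
      · intro h
        apply hne
        have := (Sum.inr.inj h)
        exact ((Prod.ext_iff.mp this).1).symm
      · show ¬ HPos G (Sum.inr (s, i)) (Sum.inr (s', k))
        simpa [HPos] using hne
  have hdisj : Disjoint (f '' A) (g '' B) := by
    rw [Set.disjoint_left]
    rintro x ⟨k, _, rfl⟩ ⟨k', _, hx⟩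
    apply hne
    have := Sum.inr.inj hx
    exact ((Prod.ext_iff.mp this).1).symm
  calc A.ncard + B.ncard
      = (f '' A).ncard + (g '' B).ncard := by
        rw [Set.ncard_image_of_injective _ hfinj, Set.ncard_image_of_injective _ hginj]
    _ = (f '' A ∪ g '' B).ncard :=
        (Set.ncard_union_eq hdisj (Set.toFinite _) (Set.toFinite _)).symm
    _ ≤ _ := Set.ncard_le_ncard hsub (Set.toFinite _)

/-- In the reduction graph `H` built from a 4-regular graph `G` on
`n ≥ 7` vertices, every cluster of a `t`-perfect clustering contains vertices from at
most one clique of `H − G'`. -/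
theorem stmt_14 {V : Type*} [Fintype V] [DecidableEq V]
    (G : V → V → Prop) [DecidableRel G]
    (hGsymm : ∀ u v, G u v → G v u) (hGirr : ∀ v, ¬ G v v)
    (hreg : ∀ v : V, (Finset.univ.filter (fun w => G v w)).card = 4)
    (hn : 7 ≤ Fintype.card V)
    (C : HVert V → HVert V → Prop) (hC : Equivalence C)
    (hperf : TPerfect G C) :
    ∀ (s s' : {s : Finset V // s.card = 3}) (i j : Fin 7),
      C (Sum.inr (s, i)) (Sum.inr (s', j)) → s = s' := by
  intro s s' i j hij
  by_contra hne
  classical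
  have h1 := err_ge G C hC s s' i j hne hij
  have h2 := err_ge G C hC s' s j i (Ne.symm hne) (hC.symm hij)
  have e1 : errAt (HPos G) C (Sum.inr (s, i)) ≤ 3 := hperf.2 (s, i)
  have e2 : errAt (HPos G) C (Sum.inr (s', j)) ≤ 3 := hperf.2 (s', j)
  set A : Set (Fin 7) := {k | ¬ C (Sum.inr (s, i)) (Sum.inr (s, k))}
  set A' : Set (Fin 7) := {k | ¬ C (Sum.inr (s', j)) (Sum.inr (s', k))}
  have hcA : A.ncard + Aᶜ.ncard = 7 := by
    rw [Set.ncard_add_ncard_compl]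
    simp
  have hcA' : A'.ncard + A'ᶜ.ncard = 7 := by
    rw [Set.ncard_add_ncard_compl]
    simp
  omega
end

section
/- In the reduction graph H (as above, n ≥ 7), any t-perfect clustering has every cluster containing at most three vertices of G', and each cluster contains vertices from exactly one clique of H − G'. -/
open scoped Classical
open Finset

section StmtAux

variable {V : Type*} [Fintype V] [DecidableEq V]

lemma ncard_le_errAt {W : Type*} [Fintype W] (pos C : W → W → Prop) (v : W) (T : Set W)
    (h : T ⊆ {w | w ≠ v ∧ ((pos v w ∧ ¬ C v w) ∨ (¬ pos v w ∧ C v w))}) :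
    T.ncard ≤ errAt pos C v :=
  Set.ncard_le_ncard h (Set.toFinite _)

lemma finset_le_errAt {W : Type*} [Fintype W] (pos C : W → W → Prop) (v : W) (T : Finset W)
    (h : ∀ w ∈ T, w ≠ v ∧ ((pos v w ∧ ¬ C v w) ∨ (¬ pos v w ∧ C v w))) :
    T.card ≤ errAt pos C v := by
  have := ncard_le_errAt pos C v (↑T) (fun w hw => h w (by simpa using hw))
  simpa [Set.ncard_coe_finset] using this

lemma clique_err (G : V → V → Prop) (C : HVert V → HVert V → Prop) (hC : Equivalence C)
    (hperf : TPerfect G C) (s s' : {s : Finset V // s.card = 3}) (i : Fin 7) (hne : s ≠ s') :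
    (7 - (Finset.univ.filter (fun k : Fin 7 => C (Sum.inr (s, i)) (Sum.inr (s, k)))).card)
      + (Finset.univ.filter (fun k : Fin 7 => C (Sum.inr (s, i)) (Sum.inr (s', k)))).card ≤ 3 := by
  set p : HVert V := Sum.inr (s, i) with hp
  have hinj1 : Function.Injective (fun k : Fin 7 => (Sum.inr (s, k) : HVert V)) := by
    intro a b h; simpa using h
  have hinj2 : Function.Injective (fun k : Fin 7 => (Sum.inr (s', k) : HVert V)) := by
    intro a b h; simpa using h
  set F1 : Finset (HVert V) :=
    (Finset.univ.filter (fun k : Fin 7 => ¬ C p (Sum.inr (s, k)))).image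
      (fun k => Sum.inr (s, k)) with hF1
  set F2 : Finset (HVert V) :=
    (Finset.univ.filter (fun k : Fin 7 => C p (Sum.inr (s', k)))).image
      (fun k => Sum.inr (s', k)) with hF2
  have hdisj : Disjoint F1 F2 := by
    rw [Finset.disjoint_left]
    intro w h1 h2
    simp only [hF1, hF2, Finset.mem_image, Finset.mem_filter] at h1 h2
    obtain ⟨a, _, rfl⟩ := h1
    obtain ⟨b, _, hb⟩ := h2
    have hb' : s' = s ∧ b = a := by simpa using hb
    exact hne hb'.1.symm
  have hcard1 : F1.card =
      7 - (Finset.univ.filter (fun k : Fin 7 => C p (Sum.inr (s, k)))).card := by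
    rw [hF1, Finset.card_image_of_injective _ hinj1]
    have := Finset.card_filter_add_card_filter_not
      (s := (Finset.univ : Finset (Fin 7))) (fun k : Fin 7 => C p (Sum.inr (s, k)))
    simp only [Finset.card_univ, Fintype.card_fin] at this
    omega
  have hcard2 : F2.card =
      (Finset.univ.filter (fun k : Fin 7 => C p (Sum.inr (s', k)))).card :=
    Finset.card_image_of_injective _ hinj2
  have hsub : (F1 ∪ F2).card ≤ errAt (HPos G) C p := by
    apply finset_le_errAt
    intro w hw
    rcases Finset.mem_union.1 hw with hw | hw
    · simp only [hF1, Finset.mem_image, Finset.mem_filter] at hw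
      obtain ⟨k, ⟨-, hk⟩, rfl⟩ := hw
      refine ⟨?_, Or.inl ⟨?_, hk⟩⟩
      · intro h; rw [← h] at hk; exact hk (hC.refl _)
      · show (s, i).1 = (s, k).1; rfl
    · simp only [hF2, Finset.mem_image, Finset.mem_filter] at hw
      obtain ⟨k, ⟨-, hk⟩, rfl⟩ := hw
      refine ⟨?_, Or.inr ⟨?_, hk⟩⟩
      · simp only [hp, ne_eq, Sum.inr.injEq, Prod.mk.injEq]
        intro h; exact hne h.1.symm
      · show ¬ ((s, i).1 = (s', k).1); exact hne
  rw [Finset.card_union_of_disjoint hdisj, hcard1, hcard2] at hsub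
  exact le_trans hsub (hperf.2 (s, i))

lemma two_cliques (G : V → V → Prop) (C : HVert V → HVert V → Prop) (hC : Equivalence C)
    (hperf : TPerfect G C) {s s' : {s : Finset V // s.card = 3}} {i j : Fin 7}
    (h : C (Sum.inr (s, i)) (Sum.inr (s', j))) : s = s' := by
  by_contra hne
  set p : HVert V := Sum.inr (s, i)
  set q : HVert V := Sum.inr (s', j)
  set a := (Finset.univ.filter (fun k : Fin 7 => C p (Sum.inr (s, k)))).card with ha
  set b := (Finset.univ.filter (fun k : Fin 7 => C p (Sum.inr (s', k)))).card with hb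
  have h1 : 7 - a + b ≤ 3 := clique_err G C hC hperf s s' i hne
  have h2' := clique_err G C hC hperf s' s j (fun hss => hne hss.symm)
  have he1 : (Finset.univ.filter (fun k : Fin 7 => C q (Sum.inr (s', k)))) =
      (Finset.univ.filter (fun k : Fin 7 => C p (Sum.inr (s', k)))) := by
    exact Finset.filter_congr fun k _ =>
      ⟨fun h' => hC.trans h h', fun h' => hC.trans (hC.symm h) h'⟩
  have he2 : (Finset.univ.filter (fun k : Fin 7 => C q (Sum.inr (s, k)))) =
      (Finset.univ.filter (fun k : Fin 7 => C p (Sum.inr (s, k)))) := by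
    exact Finset.filter_congr fun k _ =>
      ⟨fun h' => hC.trans h h', fun h' => hC.trans (hC.symm h) h'⟩
  rw [he1, he2, ← ha, ← hb] at h2'
  have hale : a ≤ 7 := le_trans (Finset.card_filter_le _ _) (by simp)
  have hble : b ≤ 7 := le_trans (Finset.card_filter_le _ _) (by simp)
  have ha1 : 1 ≤ a := by
    rw [ha]
    refine Finset.card_pos.2 ⟨i, ?_⟩
    simp [hC.refl p]
    exact hC.refl p
  have hb1 : 1 ≤ b := by
    rw [hb]
    refine Finset.card_pos.2 ⟨j, ?_⟩
    simp [h]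
    exact h
  omega

lemma count_containing (u : V) :
    (Finset.univ.filter (fun s : {s : Finset V // s.card = 3} => u ∈ s.1)).card =
      Nat.choose (Fintype.card V - 1) 2 := by
  have hbij : (Finset.univ.filter (fun s : {s : Finset V // s.card = 3} => u ∈ s.1)).card =
      ((Finset.univ.erase u).powersetCard 2).card := by
    apply Finset.card_bij (fun s _ => s.1.erase u)
    · intro s hs
      simp only [Finset.mem_filter] at hs
      rw [Finset.mem_powersetCard]
      exact ⟨Finset.erase_subset_erase u (Finset.subset_univ _),
        by rw [Finset.card_erase_of_mem hs.2, s.2]⟩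
    · intro s₁ h₁ s₂ h₂ heq
      simp only [Finset.mem_filter] at h₁ h₂
      apply Subtype.ext
      rw [← Finset.insert_erase h₁.2, ← Finset.insert_erase h₂.2, heq]
    · intro t ht
      rw [Finset.mem_powersetCard] at ht
      have hu : u ∉ t := fun h => (Finset.mem_erase.1 (ht.1 h)).1 rfl
      refine ⟨⟨insert u t, by rw [Finset.card_insert_of_notMem hu, ht.2]⟩, ?_, ?_⟩
      · simp [Finset.mem_insert]
      · exact Finset.erase_insert hu
  rw [hbij, Finset.card_powersetCard, Finset.card_erase_of_mem (Finset.mem_univ u),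
    Finset.card_univ]

lemma no_pos_clique (G : V → V → Prop) (C : HVert V → HVert V → Prop)
    (hn : 7 ≤ Fintype.card V) (hperf : TPerfect G C) (u : V)
    (h : ∀ (s : {s : Finset V // s.card = 3}) (k : Fin 7), u ∈ s.1 →
      ¬ C (Sum.inl u) (Sum.inr (s, k))) : False := by
  set T : Finset (HVert V) :=
    ((Finset.univ.filter (fun q : {s : Finset V // s.card = 3} × Fin 7 => u ∈ q.1.1)).image
      Sum.inr) with hT
  have hprod : (Finset.univ.filter
        (fun q : {s : Finset V // s.card = 3} × Fin 7 => u ∈ q.1.1)) =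
      (Finset.univ.filter (fun s : {s : Finset V // s.card = 3} => u ∈ s.1)) ×ˢ
        (Finset.univ : Finset (Fin 7)) := by
    ext q
    simp [Finset.mem_product]
  have hcard : T.card = Nat.choose (Fintype.card V - 1) 2 * 7 := by
    rw [hT, Finset.card_image_of_injective _ Sum.inr_injective, hprod,
      Finset.card_product, count_containing]
    simp
  have hle : T.card ≤ errAt (HPos G) C (Sum.inl u) := by
    apply finset_le_errAt
    intro w hw
    simp only [hT, Finset.mem_image, Finset.mem_filter] at hw
    obtain ⟨q, ⟨-, hq⟩, rfl⟩ := hw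
    refine ⟨by simp, Or.inl ⟨hq, ?_⟩⟩
    exact (by simpa using h q.1 q.2 hq : ¬ C (Sum.inl u) (Sum.inr q))
  have htol := hperf.1 u
  have hpos : 1 ≤ Nat.choose (Fintype.card V - 1) 2 :=
    Nat.choose_pos (by omega)
  omega

end StmtAux

/-- In the reduction graph `H` (from a 4-regular graph on `n ≥ 7`
vertices), any `t`-perfect clustering has every cluster containing at most three
vertices of `G'`, and every cluster contains vertices from exactly one clique of
`H − G'`. -/
theorem stmt_15 {V : Type*} [Fintype V] [DecidableEq V]
    (G : V → V → Prop) [DecidableRel G]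
    (hGsymm : ∀ u v, G u v → G v u) (hGirr : ∀ v, ¬ G v v)
    (hreg : ∀ v : V, (Finset.univ.filter (fun w => G v w)).card = 4)
    (hn : 7 ≤ Fintype.card V)
    (C : HVert V → HVert V → Prop) (hC : Equivalence C)
    (hperf : TPerfect G C) :
    (∀ u : V, ({v : V | C (Sum.inl u) (Sum.inl v)} : Set V).ncard ≤ 3) ∧
    (∀ w : HVert V, ∃ s : {s : Finset V // s.card = 3},
      (∃ i : Fin 7, C w (Sum.inr (s, i))) ∧
      (∀ (s' : {s : Finset V // s.card = 3}) (i : Fin 7),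
        C w (Sum.inr (s', i)) → s' = s)) := by
  classical
  -- Existence of a clique vertex for each `G'`-vertex, with a positive connection
  have hexist : ∀ u : V, ∃ (s : {s : Finset V // s.card = 3}) (i : Fin 7),
      u ∈ s.1 ∧ C (Sum.inl u) (Sum.inr (s, i)) := by
    intro u
    by_contra hcon
    push_neg at hcon
    exact no_pos_clique G C hn hperf u (fun s k hu hc => hcon s k hu hc)
  have huniq : ∀ (w : HVert V) (s s' : {s : Finset V // s.card = 3}) (i i' : Fin 7),
      C w (Sum.inr (s, i)) → C w (Sum.inr (s', i')) → s = s' := by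
    intro w s s' i i' h1 h2
    exact two_cliques G C hC hperf (hC.trans (hC.symm h1) h2)
  constructor
  · -- every cluster contains at most three vertices of `G'`
    intro u
    by_contra hbig
    push_neg at hbig
    obtain ⟨s, i, -, hsi⟩ := hexist u
    -- the vertices of the cluster inside `s` form a set of size at most 3
    have hsub3 : ({v : V | C (Sum.inl u) (Sum.inl v)} ∩ ↑s.1 : Set V).ncard ≤ 3 := by
      have h1 : ({v : V | C (Sum.inl u) (Sum.inl v)} ∩ ↑s.1 : Set V).ncard ≤
          (↑s.1 : Set V).ncard :=
        Set.ncard_le_ncard Set.inter_subset_right (Set.toFinite _)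
      rwa [Set.ncard_coe_finset, s.2] at h1
    have hnsub : ¬ ({v : V | C (Sum.inl u) (Sum.inl v)} : Set V) ⊆ ↑s.1 := by
      intro hss
      have := Set.ncard_le_ncard hss (Set.toFinite _)
      rw [Set.ncard_coe_finset, s.2] at this
      omega
    obtain ⟨v, hvC, hvs⟩ := Set.not_subset.1 hnsub
    refine no_pos_clique G C hn hperf v ?_
    intro s'' k hv hCk
    have : s = s'' := huniq (Sum.inl u) s s'' i k hsi (hC.trans hvC hCk)
    rw [this] at hvs
    exact hvs hv
  · -- every cluster meets exactly one clique
    intro w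
    match w with
    | Sum.inl u =>
      obtain ⟨s, i, -, hsi⟩ := hexist u
      exact ⟨s, ⟨i, hsi⟩, fun s' i' h => huniq _ s' s i' i h hsi⟩
    | Sum.inr p =>
      refine ⟨p.1, ⟨p.2, ?_⟩, fun s' i' h => huniq _ s' p.1 i' p.2 h ?_⟩ <;>
        exact hC.refl (Sum.inr p)
end

section
/- The reduction graph H admits a t-perfect clustering if and only if the 4-regular graph G admits a partition of its vertex set into triangles. -/
section StmtAux
open Finset Sum

lemma card_le_errAt {W : Type*} [Fintype W] (pos C : W → W → Prop) (v : W) (F : Finset W)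
    (hF : ∀ w ∈ F, w ≠ v ∧ ((pos v w ∧ ¬ C v w) ∨ (¬ pos v w ∧ C v w))) :
    F.card ≤ errAt pos C v := by
  classical
  rw [errAt, ← Set.ncard_coe_finset F]
  exact Set.ncard_le_ncard (fun w hw => hF w hw) (Set.toFinite _)

lemma count_triples {V : Type*} [Fintype V] [DecidableEq V] (u : V) :
    (univ.filter (fun t : {s : Finset V // s.card = 3} => u ∈ t.1)).card
      = Nat.choose (Fintype.card V - 1) 2 := by
  classical
  have h : ((univ.erase u).powersetCard 2).card = Nat.choose (Fintype.card V - 1) 2 := by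
    rw [card_powersetCard, card_erase_of_mem (mem_univ u), card_univ]
  rw [← h]
  apply Finset.card_bij (fun t _ => t.1.erase u)
  · intro t ht
    simp only [mem_filter, mem_univ, true_and] at ht
    rw [mem_powersetCard]
    exact ⟨fun x hx => mem_erase.mpr ⟨(mem_erase.mp hx).1, mem_univ x⟩,
      by rw [card_erase_of_mem ht, t.2]⟩
  · intro t ht s hs h
    simp only [mem_filter, mem_univ, true_and] at ht hs
    apply Subtype.ext
    rw [← insert_erase ht, ← insert_erase hs, h]
  · intro r hr
    rw [mem_powersetCard] at hr
    have hu : u ∉ r := fun h => (mem_erase.mp (hr.1 h)).1 rfl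
    refine ⟨⟨insert u r, by rw [card_insert_of_notMem hu, hr.2]⟩, ?_, ?_⟩
    · simp [mem_filter]
    · simp [erase_insert hu]

lemma card_filter_fst {α β : Type*} [Fintype α] [Fintype β] (P : α → Prop) [DecidablePred P] :
    (univ.filter (fun p : α × β => P p.1)).card = (univ.filter P).card * Fintype.card β := by
  classical
  have : (univ.filter (fun p : α × β => P p.1)) = (univ.filter P) ×ˢ univ := by
    ext p; simp
  rw [this, card_product, card_univ]

lemma errAt_le_card {W : Type*} [Fintype W] (pos C : W → W → Prop) (v : W) (F : Finset W)
    (hF : ∀ w, w ≠ v → ((pos v w ∧ ¬ C v w) ∨ (¬ pos v w ∧ C v w)) → w ∈ F) :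
    errAt pos C v ≤ F.card := by
  classical
  rw [errAt, ← Set.ncard_coe_finset F]
  exact Set.ncard_le_ncard (fun w hw => hF w hw.1 hw.2) (Set.toFinite _)


lemma aux_backward {V : Type*} [Fintype V] [DecidableEq V]
    (G : V → V → Prop) [DecidableRel G]
    (hGsymm : ∀ u v, G u v → G v u) (hGirr : ∀ v, ¬ G v v)
    (hreg : ∀ v : V, (Finset.univ.filter (fun w => G v w)).card = 4)
    (hn : 7 ≤ Fintype.card V)
    (𝒯 : Finset (Finset V))
    (h𝒯 : ∀ s ∈ 𝒯, s.card = 3 ∧ ∀ u ∈ s, ∀ v ∈ s, u ≠ v → G u v)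
    (hpart : ∀ v : V, ∃! s, s ∈ 𝒯 ∧ v ∈ s) :
    ∃ C : HVert V → HVert V → Prop, Equivalence C ∧ TPerfect G C := by
  classical
  -- the triangle of each vertex
  choose tri htri using hpart
  have hmem : ∀ v, v ∈ tri v := fun v => (htri v).1.2
  have hT : ∀ v, tri v ∈ 𝒯 := fun v => (htri v).1.1
  have huniq : ∀ v s, s ∈ 𝒯 → v ∈ s → s = tri v := fun v s h1 h2 => (htri v).2 s ⟨h1, h2⟩
  have htri3 : ∀ v, (tri v).card = 3 := fun v => (h𝒯 _ (hT v)).1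
  have hGtri : ∀ v w, w ∈ tri v → w ≠ v → G v w := fun v w hw hne =>
    (h𝒯 _ (hT v)).2 v (hmem v) w hw (fun h => hne h.symm)
  set K := Nat.choose (Fintype.card V - 1) 2 with hKdef
  -- labeling function
  let tr : V → {s : Finset V // s.card = 3} := fun v => ⟨tri v, htri3 v⟩
  let lab : HVert V → {s : Finset V // s.card = 3} := fun x => match x with
    | inl v => tr v
    | inr p => p.1
  refine ⟨fun x y => lab x = lab y, ⟨fun _ => rfl, Eq.symm, Eq.trans⟩, ?_, ?_⟩
  · -- original vertices
    intro u
    set Nb := univ.filter (fun v => G u v) with hNbdef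
    have h1 : (univ.filter (fun v => G u v ∧ v ∉ tri u)).card = 2 := by
      have he : univ.filter (fun v => G u v ∧ v ∉ tri u) = Nb \ tri u := by
        ext v; simp [hNbdef]
      have hi : Nb ∩ tri u = (tri u).erase u := by
        ext v
        simp only [mem_inter, mem_erase, hNbdef, mem_filter, mem_univ, true_and]
        constructor
        · rintro ⟨hg, hm⟩; exact ⟨fun h => hGirr u (h ▸ hg), hm⟩
        · rintro ⟨hne, hm⟩; exact ⟨hGtri u v hm hne, hm⟩
      have := Finset.card_sdiff_add_card_inter Nb (tri u)
      rw [hi, card_erase_of_mem (hmem u), htri3, hreg u] at this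
      rw [he]; omega
    have h2 : (univ.filter (fun p : {s : Finset V // s.card = 3} × Fin 7 =>
        u ∈ p.1.1 ∧ p.1 ≠ tr u)).card = (K - 1) * 7 := by
      have := card_filter_fst (β := Fin 7) (fun t : {s : Finset V // s.card = 3} => u ∈ t.1 ∧ t ≠ tr u)
      rw [this]
      have he : univ.filter (fun t : {s : Finset V // s.card = 3} => u ∈ t.1 ∧ t ≠ tr u)
          = (univ.filter (fun t : {s : Finset V // s.card = 3} => u ∈ t.1)).erase (tr u) := by
        ext t
        simp only [mem_filter, mem_univ, true_and, mem_erase]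
        tauto
      rw [he, card_erase_of_mem (by simp [mem_filter, tr]; exact hmem u), count_triples]
      simp [Fintype.card_fin]
      rw [hKdef]
    apply le_trans (errAt_le_card _ _ _
      (((univ.filter (fun v => G u v ∧ v ∉ tri u)).image inl) ∪
       ((univ.filter (fun p : {s : Finset V // s.card = 3} × Fin 7 =>
          u ∈ p.1.1 ∧ p.1 ≠ tr u)).image inr)) ?_)
    · apply le_trans (card_union_le _ _)
      rw [card_image_of_injective _ Sum.inl_injective,
        card_image_of_injective _ Sum.inr_injective, h1, h2]
      omega
    · rintro (v | p) hne herr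
      · -- inl case
        apply mem_union_left
        simp only [mem_image, mem_filter, mem_univ, true_and]
        refine ⟨v, ?_, rfl⟩
        simp only [HPos] at herr
        rcases herr with ⟨hg, hc⟩ | ⟨hg, hc⟩
        · refine ⟨hg, fun hv => hc ?_⟩
          exact Subtype.ext (huniq v (tri u) (hT u) hv)
        · exfalso
          have hvu : v ≠ u := fun h => hne (by rw [h])
          have : tri u = tri v := congrArg Subtype.val hc
          exact hg (hGtri u v (this ▸ hmem v) hvu)
      · -- inr case
        apply mem_union_right
        simp only [mem_image, mem_filter, mem_univ, true_and]
        refine ⟨p, ?_, rfl⟩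
        simp only [HPos] at herr
        rcases herr with ⟨hg, hc⟩ | ⟨hg, hc⟩
        · exact ⟨hg, fun h => hc h.symm⟩
        · exact absurd ((show tr u = p.1 from hc) ▸ hmem u) hg
  · -- clique vertices
    intro p
    apply le_trans (errAt_le_card _ _ _ (p.1.1.image inl) ?_)
    · rw [card_image_of_injective _ Sum.inl_injective, p.1.2]
    · rintro (v | q) hne herr
      · simp only [mem_image]
        refine ⟨v, ?_, rfl⟩
        simp only [HPos] at herr
        rcases herr with ⟨hg, _⟩ | ⟨hg, hc⟩
        · exact hg
        · exfalso
          have : p.1.1 = tri v := congrArg Subtype.val hc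
          exact hg (this ▸ hmem v)
      · exfalso
        simp only [HPos] at herr
        rcases herr with ⟨hg, hc⟩ | ⟨hg, hc⟩
        · exact hc hg
        · exact hg hc

lemma aux_forward {V : Type*} [Fintype V] [DecidableEq V]
    (G : V → V → Prop) [DecidableRel G]
    (hGirr : ∀ v, ¬ G v v)
    (hreg : ∀ v : V, (Finset.univ.filter (fun w => G v w)).card = 4)
    (hn : 7 ≤ Fintype.card V)
    (C : HVert V → HVert V → Prop) (hC : Equivalence C) (hTP : TPerfect G C) :
    ∃ 𝒯 : Finset (Finset V),
      (∀ s ∈ 𝒯, s.card = 3 ∧ ∀ u ∈ s, ∀ v ∈ s, u ≠ v → G u v) ∧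
      (∀ v : V, ∃! s, s ∈ 𝒯 ∧ v ∈ s) := by
  classical
  obtain ⟨hC1, hC2⟩ := hTP
  set K := Nat.choose (Fintype.card V - 1) 2 with hKdef
  have hK1 : 1 ≤ K := Nat.choose_pos (by omega)
  -- Step A: each 7-clique lies in a single cluster
  have hA4 : ∀ (t : {s : Finset V // s.card = 3}) (i : Fin 7),
      4 ≤ (univ.filter (fun j : Fin 7 => C (inr (t,i)) (inr (t,j)))).card := by
    intro t i
    have hsub : ((univ.filter (fun j : Fin 7 => ¬ C (inr (t,i)) (inr (t,j)))).image
        (fun j => (inr (t,j) : HVert V))).card ≤ 3 := by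
      refine le_trans (card_le_errAt (HPos G) C (inr (t,i)) _ ?_) (hC2 (t,i))
      intro w hw
      simp only [mem_image, mem_filter, mem_univ, true_and] at hw
      obtain ⟨j, hj, rfl⟩ := hw
      exact ⟨fun h => hj (by rw [h]; exact hC.refl _), Or.inl ⟨rfl, hj⟩⟩
    rw [card_image_of_injective _ (fun a b hab =>
      (Prod.ext_iff.mp (inr_injective hab)).2 : Function.Injective
        (fun j : Fin 7 => (inr (t, j) : HVert V)))] at hsub
    have htot := Finset.card_filter_add_card_filter_not
      (s := (univ : Finset (Fin 7))) (p := fun j => C (inr (t,i)) (inr (t,j)))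
    rw [card_univ, Fintype.card_fin] at htot
    omega
  have hAcliq : ∀ (t : {s : Finset V // s.card = 3}) (i j : Fin 7),
      C (inr (t,i)) (inr (t,j)) := by
    intro t i j
    have h1 := hA4 t i; have h2 := hA4 t j
    set Ai := univ.filter (fun k : Fin 7 => C (inr (t,i)) (inr (t,k))) with hAi
    set Aj := univ.filter (fun k : Fin 7 => C (inr (t,j)) (inr (t,k))) with hAj
    have hnon : (Ai ∩ Aj).Nonempty := by
      rw [← card_pos]
      have hu := Finset.card_union_add_card_inter Ai Aj
      have h7 : (Ai ∪ Aj).card ≤ 7 := le_trans (card_le_card (subset_univ _)) (by simp)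
      omega
    obtain ⟨k, hk⟩ := hnon
    rw [mem_inter, hAi, hAj, mem_filter, mem_filter] at hk
    exact hC.trans hk.1.2 (hC.symm hk.2.2)
  -- Step B: two clique vertices in one cluster come from the same triple
  have hB : ∀ (p q : {s : Finset V // s.card = 3} × Fin 7), C (inr p) (inr q) → p.1 = q.1 := by
    intro p q h
    by_contra hne
    have h7 : ((univ : Finset (Fin 7)).image (fun k => (inr (q.1, k) : HVert V))).card ≤ 3 := by
      refine le_trans (card_le_errAt (HPos G) C (inr p) _ ?_) (hC2 p)
      intro w hw
      simp only [mem_image, mem_univ, true_and] at hw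
      obtain ⟨k, -, rfl⟩ := hw
      refine ⟨fun h' => hne (congrArg Prod.fst (inr_injective h')).symm,
        Or.inr ⟨hne, hC.trans h (hAcliq q.1 q.2 k)⟩⟩
    rw [card_image_of_injective _ (fun a b hab => by
      injection inr_injective hab with h1 h2), card_univ, Fintype.card_fin] at h7
    omega
  -- per-vertex: a clique in its cluster and ≥ 2 G-neighbours in its cluster
  have hEx : ∀ u : V, ∃ p₀ : {s : Finset V // s.card = 3} × Fin 7,
      u ∈ p₀.1.1 ∧ C (inl u) (inr p₀) ∧
      2 ≤ (univ.filter (fun v => G u v ∧ C (inl u) (inl v))).card := by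
    intro u
    set Nb := univ.filter (fun v => G u v) with hNbdef
    set B := univ.filter (fun v => G u v ∧ C (inl u) (inl v)) with hBdef
    set Pall := univ.filter
      (fun p : {s : Finset V // s.card = 3} × Fin 7 => u ∈ p.1.1) with hPdef
    set A := univ.filter (fun p : {s : Finset V // s.card = 3} × Fin 7 =>
      u ∈ p.1.1 ∧ C (inl u) (inr p)) with hAdef
    have hBsub : B ⊆ Nb := by
      intro v hv; rw [hBdef, mem_filter] at hv; rw [hNbdef, mem_filter]
      exact ⟨hv.1, hv.2.1⟩
    have hAsub : A ⊆ Pall := by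
      intro p hp; rw [hAdef, mem_filter] at hp; rw [hPdef, mem_filter]
      exact ⟨hp.1, hp.2.1⟩
    have hNbcard : Nb.card = 4 := hreg u
    have hPcard : Pall.card = K * 7 := by
      have h := card_filter_fst (α := {s : Finset V // s.card = 3}) (β := Fin 7)
        (fun t => u ∈ t.1)
      rw [count_triples, Fintype.card_fin] at h
      exact h
    have hlow : (Nb \ B).card + (Pall \ A).card ≤ 7 * (K - 1) + 2 := by
      refine le_trans ?_ (hC1 u)
      have hdisj : Disjoint ((Nb \ B).image (inl : V → HVert V)) ((Pall \ A).image inr) := by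
        rw [Finset.disjoint_left]
        rintro x hx hy
        obtain ⟨v, -, rfl⟩ := mem_image.mp hx
        obtain ⟨p, -, hp⟩ := mem_image.mp hy
        exact Sum.inr_ne_inl hp
      have hle := card_le_errAt (HPos G) C (inl u)
        (((Nb \ B).image inl) ∪ ((Pall \ A).image inr)) ?_
      · rwa [card_union_of_disjoint hdisj, card_image_of_injective _ inl_injective,
          card_image_of_injective _ inr_injective] at hle
      · intro w hw
        rw [mem_union] at hw
        rcases hw with hw | hw
        · obtain ⟨v, hv, rfl⟩ := mem_image.mp hw
          rw [mem_sdiff, hNbdef, hBdef, mem_filter, mem_filter] at hv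
          obtain ⟨⟨-, hg⟩, hnb⟩ := hv
          have hnc : ¬ C (inl u) (inl v) := fun hc => hnb ⟨mem_univ v, hg, hc⟩
          refine ⟨fun h => hGirr u ?_, Or.inl ⟨hg, hnc⟩⟩
          · injection h with h'; rwa [h'] at hg
        · obtain ⟨p, hp, rfl⟩ := mem_image.mp hw
          rw [mem_sdiff, hPdef, hAdef, mem_filter, mem_filter] at hp
          obtain ⟨⟨-, hup⟩, hnb⟩ := hp
          have hnc : ¬ C (inl u) (inr p) := fun hc => hnb ⟨mem_univ p, hup, hc⟩
          exact ⟨fun h => Sum.inr_ne_inl h, Or.inl ⟨hup, hnc⟩⟩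
    have e1 : (Nb \ B).card + B.card = 4 := by
      rw [card_sdiff_add_card_eq_card hBsub, hNbcard]
    have e2 : (Pall \ A).card + A.card = K * 7 := by
      rw [card_sdiff_add_card_eq_card hAsub, hPcard]
    have hApos : 0 < A.card := by omega
    obtain ⟨p₀, hp₀⟩ := card_pos.mp hApos
    rw [hAdef, mem_filter] at hp₀
    have hA7 : A.card ≤ 7 := by
      have hsub7 : A ⊆ univ.image
          (fun i : Fin 7 => ((p₀.1, i) : {s : Finset V // s.card = 3} × Fin 7)) := by
        intro p hp
        rw [hAdef, mem_filter] at hp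
        have hcc : C (inr p₀) (inr p) := hC.trans (hC.symm hp₀.2.2) hp.2.2
        have h1 : p₀.1 = p.1 := hB _ _ hcc
        rw [mem_image]
        exact ⟨p.2, mem_univ _, by rw [h1]⟩
      refine le_trans (card_le_card hsub7) (le_trans card_image_le (by simp))
    exact ⟨p₀, hp₀.2.1, hp₀.2.2, by omega⟩
  -- any original vertex in the cluster of a clique vertex belongs to its triple
  have hmemt : ∀ (u v : V) (p : {s : Finset V // s.card = 3} × Fin 7),
      C (inl u) (inr p) → C (inl u) (inl v) → v ∈ p.1.1 := by
    intro u v p hp huv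
    obtain ⟨q, hq1, hq2, -⟩ := hEx v
    have hqp : q.1 = p.1 := hB q p (hC.trans (hC.symm hq2) (hC.trans (hC.symm huv) hp))
    exact hqp ▸ hq1
  have hf : ∀ u : V, ∃ t : {s : Finset V // s.card = 3}, u ∈ t.1 ∧
      (∃ i, C (inl u) (inr (t, i))) ∧ ∀ v ∈ t.1, v ≠ u → (G u v ∧ C (inl u) (inl v)) := by
    intro u
    obtain ⟨p₀, hu, hcp, hb2⟩ := hEx u
    refine ⟨p₀.1, hu, ⟨p₀.2, hcp⟩, ?_⟩
    set B := univ.filter (fun v => G u v ∧ C (inl u) (inl v)) with hBdef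
    have hsub : B ⊆ p₀.1.1.erase u := by
      intro v hv
      rw [hBdef, mem_filter] at hv
      exact mem_erase.mpr ⟨fun h => hGirr u (h ▸ hv.2.1), hmemt u v p₀ hcp hv.2.2⟩
    have hBeq : B = p₀.1.1.erase u := Finset.eq_of_subset_of_card_le hsub
      (by rw [card_erase_of_mem hu, p₀.1.2]; omega)
    intro v hv hne
    have hvB : v ∈ B := hBeq ▸ mem_erase.mpr ⟨hne, hv⟩
    rw [hBdef, mem_filter] at hvB
    exact hvB.2
  choose f hf1 hf2 hf3 using hf
  have hCall : ∀ u v, v ∈ (f u).1 → C (inl u) (inl v) := by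
    intro u v hv
    by_cases h : v = u
    · subst h; exact hC.refl _
    · exact (hf3 u v hv h).2
  have hcons : ∀ u v, C (inl u) (inl v) → f u = f v := by
    intro u v huv
    obtain ⟨i, hi⟩ := hf2 u
    obtain ⟨j, hj⟩ := hf2 v
    have hcc : C (inr (f u, i)) (inr (f v, j)) := hC.trans (hC.symm hi) (hC.trans huv hj)
    exact hB (f u, i) (f v, j) hcc
  refine ⟨univ.image (fun u => (f u).1), ?_, ?_⟩
  · intro s hs
    obtain ⟨u, -, rfl⟩ := mem_image.mp hs
    refine ⟨(f u).2, ?_⟩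
    intro v hv w hw hne
    have hfv : f v = f u := (hcons u v (hCall u v hv)).symm
    exact (hf3 v w (by rw [hfv]; exact hw) (Ne.symm hne)).1
  · intro v
    refine ⟨(f v).1, ⟨mem_image_of_mem _ (mem_univ v), hf1 v⟩, ?_⟩
    rintro s ⟨hs, hvs⟩
    obtain ⟨u, -, rfl⟩ := mem_image.mp hs
    exact congrArg Subtype.val (hcons u v (hCall u v hvs))

end StmtAux

/-- The reduction graph `H` built from a 4-regular graph `G` on
`n ≥ 7` vertices with `3 ∣ n` admits a `t`-perfect clustering if and only if `G`
admits a partition of its vertex set into triangles. -/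

theorem stmt_16 {V : Type*} [Fintype V] [DecidableEq V]
    (G : V → V → Prop) [DecidableRel G]
    (hGsymm : ∀ u v, G u v → G v u) (hGirr : ∀ v, ¬ G v v)
    (hreg : ∀ v : V, (Finset.univ.filter (fun w => G v w)).card = 4)
    (hn : 7 ≤ Fintype.card V) (hdvd : 3 ∣ Fintype.card V) :
    (∃ C : HVert V → HVert V → Prop, Equivalence C ∧ TPerfect G C) ↔
    (∃ 𝒯 : Finset (Finset V),
      (∀ s ∈ 𝒯, s.card = 3 ∧ ∀ u ∈ s, ∀ v ∈ s, u ≠ v → G u v) ∧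
      (∀ v : V, ∃! s, s ∈ 𝒯 ∧ v ∈ s)) := by
  constructor
  · rintro ⟨C, hC, hTP⟩
    exact aux_forward G hGirr hreg hn C hC hTP
  · rintro ⟨𝒯, h1, h2⟩
    exact aux_backward G hGsymm hGirr hreg hn 𝒯 h1 h2
end

section
/- In the biclustering NP-hardness reduction graph from a 3-cover instance, if a clustering is t-perfect then for any two distinct triplets S_i, S_j ∈ 𝒮, the triplet vertices x(S_i) and x(S_j) lie in different clusters. -/
/-- The `V₁`-side of the biclustering reduction graph: a ground vertex `x_u` for each
ground element `u : U`, and a triplet vertex `x(S_i)` for each triplet index `i : ι`. -/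
abbrev BV1 (U ι : Type*) := U ⊕ ι

/-- The `V₂`-side: a ground vertex `y_u` for each `u : U`, triplet vertices
`y_k(S_i)` for `i : ι`, `k : Fin m`, and `n3` dummy vertices. -/
abbrev BV2 (U ι : Type*) (m n3 : ℕ) := U ⊕ ((ι × Fin m) ⊕ Fin n3)

/-- The positive edges of the complete bipartite reduction graph: ground–ground edges
`x_u y_{u'}` are positive iff `u = u'` or `u, u'` share a triplet; ground–triplet
edges are positive iff the ground element lies in the triplet; `x(S_i) y_k(S_j)` is
positive iff `i = j`; dummies are positive to ground `V₁`-vertices and negative to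
triplet `V₁`-vertices. -/
def BPos {U ι : Type*} (S : ι → Finset U) {m n3 : ℕ} :
    BV1 U ι → BV2 U ι m n3 → Prop
  | Sum.inl u, Sum.inl u' => u = u' ∨ ∃ i, u ∈ S i ∧ u' ∈ S i
  | Sum.inl u, Sum.inr (Sum.inl p) => u ∈ S p.1
  | Sum.inl _, Sum.inr (Sum.inr _) => True
  | Sum.inr i, Sum.inl u => u ∈ S i
  | Sum.inr i, Sum.inr (Sum.inl p) => i = p.1
  | Sum.inr _, Sum.inr (Sum.inr _) => False

/-- The number of errors at a `V₁`-vertex `v` under a clustering `C` of all vertices: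
positive edges to `V₂`-vertices outside its cluster plus negative edges to
`V₂`-vertices inside it. -/
noncomputable def errB {U ι : Type*} {m n3 : ℕ} (S : ι → Finset U)
    (C : (BV1 U ι ⊕ BV2 U ι m n3) → (BV1 U ι ⊕ BV2 U ι m n3) → Prop)
    (v : BV1 U ι) : ℕ :=
  ({w : BV2 U ι m n3 |
      (BPos S v w ∧ ¬ C (Sum.inl v) (Sum.inr w)) ∨
      (¬ BPos S v w ∧ C (Sum.inl v) (Sum.inr w))}).ncard

/-- `d(u)`: the number of triplets containing the ground element `u`. -/
def ddeg {U ι : Type*} [Fintype ι] [DecidableEq U] (S : ι → Finset U) (u : U) : ℕ :=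
  (Finset.univ.filter (fun i : ι => u ∈ S i)).card

/-- `c(u)`: the number of other ground elements sharing a triplet with `u`. -/
def cdeg {U ι : Type*} [Fintype U] [Fintype ι] [DecidableEq U]
    (S : ι → Finset U) (u : U) : ℕ :=
  (Finset.univ.filter (fun u' : U => u' ≠ u ∧ ∃ i, u ∈ S i ∧ u' ∈ S i)).card

/-- A clustering is `t`-perfect (one-sided) if each triplet `V₁`-vertex `x(S_i)` has
at most `3` incident errors and each ground `V₁`-vertex `x_u` has at most
`m(d(u) − 1) + (c(u) − 2) + (3n − 3)` incident errors. -/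
def BTPerfect {U ι : Type*} [Fintype U] [Fintype ι] [DecidableEq U]
    (S : ι → Finset U) (m : ℕ)
    (C : (BV1 U ι ⊕ BV2 U ι m (Fintype.card U)) →
         (BV1 U ι ⊕ BV2 U ι m (Fintype.card U)) → Prop) : Prop :=
  (∀ i : ι, errB S C (Sum.inr i) ≤ 3) ∧
  (∀ u : U, errB S C (Sum.inl u) ≤
      m * (ddeg S u - 1) + (cdeg S u - 2) + (Fintype.card U - 3))

/-- In the biclustering reduction graph from a 3-cover instance
(`|U| = 3n`, `|𝒮| = p`, each triplet of size 3, `m ≥ 6n + 3p`), if a clustering is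
`t`-perfect then for any two distinct triplets `S_i, S_j` the vertices `x(S_i)` and
`x(S_j)` lie in different clusters. -/
theorem stmt_17 {U ι : Type*} [Fintype U] [Fintype ι] [DecidableEq U] [DecidableEq ι]
    (n p m : ℕ) (hn : 1 ≤ n) (hp : 1 ≤ p)
    (hU : Fintype.card U = 3 * n) (hι : Fintype.card ι = p)
    (hm : 6 * n + 3 * p ≤ m)
    (S : ι → Finset U) (hS : ∀ i, (S i).card = 3) (hSinj : Function.Injective S)
    (C : (BV1 U ι ⊕ BV2 U ι m (Fintype.card U)) →
         (BV1 U ι ⊕ BV2 U ι m (Fintype.card U)) → Prop)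
    (hC : Equivalence C) (hperf : BTPerfect S m C) :
    ∀ i j : ι, i ≠ j →
      ¬ C (Sum.inl (Sum.inr i)) (Sum.inl (Sum.inr j)) := by
  intro i j hij hCij
  obtain ⟨hperf1, _⟩ := hperf
  have h3i := hperf1 i
  have h3j := hperf1 j
  -- the V2 triplet vertices of S_i
  set y : Fin m → BV2 U ι m (Fintype.card U) :=
    fun k => Sum.inr (Sum.inl (i, k)) with hy
  have hyinj : Function.Injective y := by
    intro a b hab
    simpa [hy] using hab
  set Ei : Set (BV2 U ι m (Fintype.card U)) :=
    {w | (BPos S (Sum.inr i) w ∧ ¬ C (Sum.inl (Sum.inr i)) (Sum.inr w)) ∨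
         (¬ BPos S (Sum.inr i) w ∧ C (Sum.inl (Sum.inr i)) (Sum.inr w))} with hEi
  set Ej : Set (BV2 U ι m (Fintype.card U)) :=
    {w | (BPos S (Sum.inr j) w ∧ ¬ C (Sum.inl (Sum.inr j)) (Sum.inr w)) ∨
         (¬ BPos S (Sum.inr j) w ∧ C (Sum.inl (Sum.inr j)) (Sum.inr w))} with hEj
  have hEival : errB S C (Sum.inr i) = Ei.ncard := rfl
  have hEjval : errB S C (Sum.inr j) = Ej.ncard := rfl
  set A : Set (Fin m) := {k | ¬ C (Sum.inl (Sum.inr i)) (Sum.inr (y k))} with hA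
  have hAsub : y '' A ⊆ Ei := by
    rintro w ⟨k, hk, rfl⟩
    left
    exact ⟨rfl, hk⟩
  have hAcard : A.ncard ≤ 3 := by
    have := Set.ncard_le_ncard hAsub (Set.toFinite _)
    rw [Set.ncard_image_of_injective _ hyinj] at this
    calc A.ncard ≤ Ei.ncard := this
      _ ≤ 3 := by rw [← hEival]; exact h3i
  have hBsub : y '' Aᶜ ⊆ Ej := by
    rintro w ⟨k, hk, rfl⟩
    right
    constructor
    · simp only [hy, BPos]
      exact fun h => hij h.symm
    · exact hC.trans (hC.symm hCij) (not_not.mp hk)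
  have hBcard : Aᶜ.ncard ≤ 3 := by
    have := Set.ncard_le_ncard hBsub (Set.toFinite _)
    rw [Set.ncard_image_of_injective _ hyinj] at this
    calc Aᶜ.ncard ≤ Ej.ncard := this
      _ ≤ 3 := by rw [← hEjval]; exact h3j
  have htot : A.ncard + Aᶜ.ncard = m := by
    rw [Set.ncard_add_ncard_compl]
    simp
  omega
end
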